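/- arXiv:1608.02016 — 2 statements merged into one kernel-verified Lean document; each statement's English description precedes it below -/
import Mathlib

section
/- Assume ξ and η are mutually singular. Then for every measurable f : ℝ → [0,∞], ∫ f(s) ξ(ds) = ∫ f(ζ⁻¹(t)) ξ*(dt); that is, ξ is the image measure of ξ* under the map ζ⁻¹. -/
open MeasureTheory

/-- The purely atomic part `μ^d` of a measure on `ℝ`. -/
noncomputable def atomicPart (μ : Measure ℝ) : Measure ℝ :=
  μ.restrict {t : ℝ | μ {t} ≠ 0}

/-- The diffuse part `μ^c` of a measure on `ℝ`. -/
noncomputable def diffusePart (μ : Measure ℝ) : Measure ℝ :=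
  μ.restrict {t : ℝ | μ {t} = 0}

/-- The time change `ζ`. -/
noncomputable def zeta (ξ η : Measure ℝ) (s : ℝ) : ℝ :=
  if 0 ≤ s then
    s + (atomicPart ξ (Set.Ico 0 s)).toReal + (atomicPart η (Set.Ico 0 s)).toReal
  else
    s - (atomicPart ξ (Set.Ico s 0)).toReal - (atomicPart η (Set.Ico s 0)).toReal

/-- The generalized inverse `ζ⁻¹` of the time change `ζ`. -/
noncomputable def zetaInv (ξ η : Measure ℝ) (t : ℝ) : ℝ :=
  sInf {s : ℝ | t ≤ zeta ξ η s}

/-- The stretched measure `μ*` built from `μ` using the time change `ζ` of `(ξ, η)`. -/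
noncomputable def starM (ξ η μ : Measure ℝ) : Measure ℝ :=
  (diffusePart μ).map (zeta ξ η) +
    (atomicPart μ).bind fun t =>
      (μ {t})⁻¹ • volume.restrict (Set.Icc (zeta ξ η t) (zeta ξ η t + (μ {t}).toReal))

/-!
On the diffuse part of `ξ`, `ζ⁻¹ ∘ ζ = id`, so pushing forward by `ζ` and pulling back by `ζ⁻¹`
changes nothing. An atom `t` of `ξ` is spread uniformly over `[ζ t, ζ t + ξ{t}]`; since `ζ`
jumps by at least `ξ{t}` at `t`, the whole interval is mapped back to `t` by `ζ⁻¹`, and the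
mass `ξ{t}` is recovered.
-/

open Set

lemma measurable_measure_singleton (μ : Measure ℝ) [SFinite μ] :
    Measurable fun t : ℝ => μ {t} := by
  have hdiag : MeasurableSet {p : ℝ × ℝ | p.2 = p.1} :=
    measurableSet_eq_fun measurable_snd measurable_fst
  have hslice (t : ℝ) : Prod.mk t ⁻¹' {p : ℝ × ℝ | p.2 = p.1} = {t} := by
    ext; simp
  simpa only [hslice] using measurable_measure_prodMk_left (ν := μ) hdiag

lemma measurableSet_setOf_measure_singleton_ne_zero (μ : Measure ℝ) [SFinite μ] :
    MeasurableSet {t : ℝ | μ {t} ≠ 0} :=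
  measurable_measure_singleton μ (measurableSet_singleton 0).compl

lemma diffusePart_add_atomicPart (μ : Measure ℝ) [SFinite μ] :
    diffusePart μ + atomicPart μ = μ := by
  have hcompl : {t : ℝ | μ {t} = 0} = {t : ℝ | μ {t} ≠ 0}ᶜ := by ext; simp
  rw [diffusePart, atomicPart, hcompl, add_comm, Measure.restrict_add_restrict_compl
    (measurableSet_setOf_measure_singleton_ne_zero μ)]

lemma atomicPart_apply_singleton (μ : Measure ℝ) (s : ℝ) : atomicPart μ {s} = μ {s} := by
  rw [atomicPart, Measure.restrict_apply (measurableSet_singleton s)]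
  by_cases hs : μ {s} = 0
  · rw [hs]
    exact measure_mono_null inter_subset_left hs
  · rw [inter_eq_left.2 (singleton_subset_iff.2 hs)]

lemma atomicPart_Ico_ne_top (μ : Measure ℝ) [IsLocallyFiniteMeasure μ] (a b : ℝ) :
    atomicPart μ (Ico a b) ≠ ⊤ :=
  ((Measure.restrict_apply_le _ _).trans_lt measure_Ico_lt_top).ne

lemma atomicPart_Ico_toReal_add (μ : Measure ℝ) [IsLocallyFiniteMeasure μ] {a b c : ℝ}
    (hab : a ≤ b) (hbc : b ≤ c) :
    (atomicPart μ (Ico a c)).toReal =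
      (atomicPart μ (Ico a b)).toReal + (atomicPart μ (Ico b c)).toReal := by
  rw [← Ico_union_Ico_eq_Ico hab hbc, measure_union Ico_disjoint_Ico_same measurableSet_Ico,
    ENNReal.toReal_add (atomicPart_Ico_ne_top μ a b) (atomicPart_Ico_ne_top μ b c)]

lemma csInf_eq_of_Ioi_subset_of_subset_Ici {S : Set ℝ} {s : ℝ} (hIoi : Ioi s ⊆ S)
    (hIci : S ⊆ Ici s) : sInf S = s :=
  le_antisymm
    ((csInf_le_csInf ⟨s, hIci⟩ nonempty_Ioi hIoi).trans_eq csInf_Ioi)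
    (le_csInf (nonempty_Ioi.mono hIoi) hIci)

lemma zeta_le_self_of_neg {ξ η : Measure ℝ} {u : ℝ} (hu : u < 0) : zeta ξ η u ≤ u := by
  rw [zeta, if_neg hu.not_ge]
  linarith [ENNReal.toReal_nonneg (a := atomicPart ξ (Ico u 0)),
    ENNReal.toReal_nonneg (a := atomicPart η (Ico u 0))]

lemma self_le_zeta_of_nonneg {ξ η : Measure ℝ} {u : ℝ} (hu : 0 ≤ u) : u ≤ zeta ξ η u := by
  rw [zeta, if_pos hu]
  linarith [ENNReal.toReal_nonneg (a := atomicPart ξ (Ico 0 u)),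
    ENNReal.toReal_nonneg (a := atomicPart η (Ico 0 u))]

section LocallyFinite

variable {ξ η : Measure ℝ} [IsLocallyFiniteMeasure ξ] [IsLocallyFiniteMeasure η]

lemma zeta_eq_add_of_le {u s : ℝ} (h : u ≤ s) :
    zeta ξ η s = zeta ξ η u + (s - u) + (atomicPart ξ (Ico u s)).toReal
      + (atomicPart η (Ico u s)).toReal := by
  unfold zeta
  rcases le_or_gt 0 u with hu | hu
  · rw [if_pos hu, if_pos (hu.trans h), atomicPart_Ico_toReal_add ξ hu h,
      atomicPart_Ico_toReal_add η hu h]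
    ring
  rcases le_or_gt 0 s with hs | hs
  · rw [if_pos hs, if_neg hu.not_ge, atomicPart_Ico_toReal_add ξ hu.le hs,
      atomicPart_Ico_toReal_add η hu.le hs]
    ring
  · rw [if_neg hu.not_ge, if_neg hs.not_ge, atomicPart_Ico_toReal_add ξ h hs.le,
      atomicPart_Ico_toReal_add η h hs.le]
    ring

lemma zeta_add_measure_singleton_lt {s u : ℝ} (h : s < u) :
    zeta ξ η s + (ξ {s}).toReal < zeta ξ η u := by
  have hatom : (ξ {s}).toReal ≤ (atomicPart ξ (Ico s u)).toReal := by
    rw [← atomicPart_apply_singleton ξ s]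
    exact ENNReal.toReal_mono (atomicPart_Ico_ne_top ξ s u)
      (measure_mono (singleton_subset_iff.2 ⟨le_rfl, h⟩))
  linarith [zeta_eq_add_of_le (ξ := ξ) (η := η) h.le,
    ENNReal.toReal_nonneg (a := atomicPart η (Ico s u))]

lemma strictMono_zeta : StrictMono (zeta ξ η) := fun _ _ h =>
  (le_add_of_nonneg_right ENNReal.toReal_nonneg).trans_lt (zeta_add_measure_singleton_lt h)

lemma zetaInv_eq_of_mem_Icc {s t : ℝ}
    (ht : t ∈ Icc (zeta ξ η s) (zeta ξ η s + (ξ {s}).toReal)) :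
    zetaInv ξ η t = s := by
  refine csInf_eq_of_Ioi_subset_of_subset_Ici (fun u hu => ?_) (fun u hu => ?_)
  · exact ht.2.trans (zeta_add_measure_singleton_lt hu).le
  · exact not_lt.1 fun hus => (strictMono_zeta hus).not_ge (ht.1.trans hu)

lemma zetaInv_zeta (s : ℝ) : zetaInv ξ η (zeta ξ η s) = s :=
  zetaInv_eq_of_mem_Icc ⟨le_rfl, le_add_of_nonneg_right ENNReal.toReal_nonneg⟩

end LocallyFinite

lemma monotone_zetaInv (ξ η : Measure ℝ) : Monotone (zetaInv ξ η) := by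
  intro t₁ t₂ ht
  refine csInf_le_csInf ⟨min t₁ 0, fun u hu => ?_⟩ ⟨max t₂ 0, ?_⟩ fun u hu => ht.trans hu
  · rcases lt_or_ge u 0 with hneg | hnonneg
    · exact (min_le_left _ _).trans (hu.trans (zeta_le_self_of_neg hneg))
    · exact (min_le_right _ _).trans hnonneg
  · exact (le_max_left _ _).trans (self_le_zeta_of_nonneg (le_max_right _ _))

lemma measurable_smul_volume_restrict_Icc {c : ℝ → ENNReal} {a b : ℝ → ℝ} (hc : Measurable c)
    (ha : Measurable a) (hb : Measurable b) :
    Measurable fun t => c t • volume.restrict (Icc (a t) (b t)) := by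
  refine Measure.measurable_of_measurable_coe _ fun S hS => ?_
  simp only [Measure.smul_apply, smul_eq_mul, Measure.restrict_apply hS]
  have hgraph : MeasurableSet {p : ℝ × ℝ | p.2 ∈ S ∧ a p.1 ≤ p.2 ∧ p.2 ≤ b p.1} :=
    (measurable_snd hS).inter ((measurableSet_le (ha.comp measurable_fst) measurable_snd).inter
      (measurableSet_le measurable_snd (hb.comp measurable_fst)))
  have hslice (t : ℝ) :
      Prod.mk t ⁻¹' {p : ℝ × ℝ | p.2 ∈ S ∧ a p.1 ≤ p.2 ∧ p.2 ≤ b p.1} = S ∩ Icc (a t) (b t) :=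
    rfl
  exact hc.mul <| by
    simpa only [hslice] using measurable_measure_prodMk_left (ν := volume) hgraph

lemma lintegral_inv_smul_volume_restrict_Icc {f : ℝ → ENNReal} {a : ℝ} {c y : ENNReal}
    (hc₀ : c ≠ 0) (hc : c ≠ ⊤) (hf : EqOn f (fun _ => y) (Icc a (a + c.toReal))) :
    ∫⁻ v, f v ∂(c⁻¹ • volume.restrict (Icc a (a + c.toReal))) = y := by
  rw [lintegral_smul_measure, setLIntegral_congr_fun measurableSet_Icc hf, setLIntegral_const,
    Real.volume_Icc, add_sub_cancel_left, ENNReal.ofReal_toReal hc, smul_eq_mul, mul_comm y,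
    ← mul_assoc, ENNReal.inv_mul_cancel hc₀ hc, one_mul]

theorem lintegral_starM_general (ξ η : Measure ℝ)
    [IsLocallyFiniteMeasure ξ] [IsLocallyFiniteMeasure η]
    (f : ℝ → ENNReal) (hf : Measurable f) :
    ∫⁻ s, f s ∂ξ = ∫⁻ t, f (zetaInv ξ η t) ∂(starM ξ η ξ) := by
  have hζ : Measurable (zeta ξ η) := strictMono_zeta.monotone.measurable
  have hfζ : Measurable fun t => f (zetaInv ξ η t) := hf.comp (monotone_zetaInv ξ η).measurable
  have hkernel : Measurable fun t =>
      (ξ {t})⁻¹ • volume.restrict (Icc (zeta ξ η t) (zeta ξ η t + (ξ {t}).toReal)) :=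
    measurable_smul_volume_restrict_Icc (measurable_measure_singleton ξ).inv hζ
      (hζ.add (measurable_measure_singleton ξ).ennreal_toReal)
  have hdiffuse : ∫⁻ s, f (zetaInv ξ η (zeta ξ η s)) ∂(diffusePart ξ) =
      ∫⁻ s, f s ∂(diffusePart ξ) := by
    simp only [zetaInv_zeta]
  have hatomic : ∫⁻ t, ∫⁻ v, f (zetaInv ξ η v)
        ∂((ξ {t})⁻¹ • volume.restrict (Icc (zeta ξ η t) (zeta ξ η t + (ξ {t}).toReal)))
        ∂(atomicPart ξ) = ∫⁻ t, f t ∂(atomicPart ξ) :=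
    setLIntegral_congr_fun (measurableSet_setOf_measure_singleton_ne_zero ξ) fun t ht =>
      lintegral_inv_smul_volume_restrict_Icc ht isCompact_singleton.measure_ne_top
        fun _ hv => congrArg f (zetaInv_eq_of_mem_Icc hv)
  rw [starM, lintegral_add_measure, lintegral_map hfζ hζ,
    Measure.lintegral_bind hkernel.aemeasurable hfζ.aemeasurable, hdiffuse, hatomic,
    ← lintegral_add_measure, diffusePart_add_atomicPart]

/-- Lemma 3.3 (change of variables): `ξ` is the image of `ξ*` under `ζ⁻¹`, i.e.
`∫ f(s) ξ(ds) = ∫ f(ζ⁻¹(t)) ξ*(dt)` for every measurable `f : ℝ → [0,∞]`. -/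
theorem lintegral_starM (ξ η : Measure ℝ)
    [IsLocallyFiniteMeasure ξ] [IsLocallyFiniteMeasure η]
    (hsing : ξ ⟂ₘ η) (f : ℝ → ENNReal) (hf : Measurable f) :
    ∫⁻ s, f s ∂ξ = ∫⁻ t, f (zetaInv ξ η t) ∂(starM ξ η ξ) :=
  lintegral_starM_general ξ η f hf
end

section
/- The measures ξ* and η* are diffuse, i.e. ξ*{t} = 0 and η*{t} = 0 for every t ∈ ℝ. Moreover, if ξ and η are mutually singular, then ξ* and η* are mutually singular. -/
/-!
Right after each `s`, `ζ` jumps past `ζ s + ξ {s} + η {s}`. So `ζ` is a strictly increasing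
measurable embedding, the interval onto which `ξ*` or `η*` spreads an atom at `t` meets the range
of `ζ` only in `ζ t`, and the intervals of atoms at different points are disjoint.

Diffuseness: the diffuse part pushed forward by the injective `ζ` has no atoms, and a spread atom
is absolutely continuous. Singularity: split `ξ*` and `η*` into a pushed-forward diffuse part and a
spread atomic part and compare the four pairs. The diffuse parts stay singular under the embedding
`ζ`; a pushed-forward diffuse part lives on the image under `ζ` of the non-atoms, which the spread
intervals miss; the spread atoms of `ξ` and of `η` live on disjoint unions of intervals, since
mutually singular measures share no atoms.
-/

open MeasureTheory

open Set

lemma MeasureTheory.Measure.MutuallySingular.measure_singleton_eq_zero_or {α : Type*}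
    [MeasurableSpace α] {μ ν : Measure α} (h : μ ⟂ₘ ν) (t : α) : μ {t} = 0 ∨ ν {t} = 0 := by
  by_cases ht : t ∈ h.nullSet
  · exact .inl (measure_mono_null (singleton_subset_iff.mpr ht) h.measure_nullSet)
  · exact .inr (measure_mono_null (singleton_subset_iff.mpr ht) h.measure_compl_nullSet)

lemma countable_setOf_measure_singleton_ne_zero {α : Type*} [MeasurableSpace α]
    [MeasurableSingletonClass α] (μ : Measure α) [SFinite μ] :
    {t : α | μ {t} ≠ 0}.Countable := by
  simpa only [pos_iff_ne_zero] using
    Measure.countable_meas_pos_of_disjoint_iUnion (μ := μ) measurableSet_singleton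
      fun _ _ hxy => disjoint_singleton.mpr hxy

lemma MeasureTheory.Measure.bind_apply_eq_zero_of_ae {α β : Type*} [MeasurableSpace α]
    [MeasurableSpace β] {m : Measure α} {f : α → Measure β} {s : Set β} (hs : MeasurableSet s)
    (h : ∀ᵐ t ∂m, f t s = 0) : m.bind f s = 0 :=
  nonpos_iff_eq_zero.mp <|
    (Measure.bind_apply_le f hs).trans_eq ((lintegral_congr_ae h).trans lintegral_zero)

lemma atomicPart_singleton (μ : Measure ℝ) (t : ℝ) : atomicPart μ {t} = μ {t} := by
  by_cases h : μ {t} = 0 <;> simp [atomicPart, Measure.restrict_apply, h]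

instance (μ : Measure ℝ) : NullSingletonClass (diffusePart μ) where
  measure_singleton t := by
    by_cases h : μ {t} = 0 <;> simp [diffusePart, Measure.restrict_apply, h]

instance (μ : Measure ℝ) [IsLocallyFiniteMeasure μ] : IsLocallyFiniteMeasure (atomicPart μ) := by
  unfold atomicPart; infer_instance

lemma ae_atomicPart_measure_singleton_ne_zero (μ : Measure ℝ) [SFinite μ] :
    ∀ᵐ t ∂atomicPart μ, μ {t} ≠ 0 :=
  ae_restrict_mem (countable_setOf_measure_singleton_ne_zero μ).measurableSet

noncomputable def signedCDF (ν : Measure ℝ) (s : ℝ) : ℝ :=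
  if 0 ≤ s then ν.real (Ico 0 s) else -ν.real (Ico s 0)

lemma signedCDF_sub_signedCDF (ν : Measure ℝ) [IsLocallyFiniteMeasure ν] {s t : ℝ}
    (hst : s ≤ t) : signedCDF ν t - signedCDF ν s = ν.real (Ico s t) := by
  have split {a b c : ℝ} (hab : a ≤ b) (hbc : b ≤ c) :
      ν.real (Ico a c) = ν.real (Ico a b) + ν.real (Ico b c) := by
    rw [← Ico_union_Ico_eq_Ico hab hbc]
    exact measureReal_union Ico_disjoint_Ico_same measurableSet_Ico
      measure_Ico_lt_top.ne measure_Ico_lt_top.ne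
  unfold signedCDF
  split_ifs with ht hs hs
  · rw [split hs hst]; ring
  · rw [split (le_of_not_ge hs) ht]; ring
  · exact absurd (hs.trans hst) ht
  · rw [split hst (le_of_not_ge ht)]; ring

lemma zeta_eq_add_signedCDF (ξ η : Measure ℝ) (s : ℝ) :
    zeta ξ η s = s + signedCDF (atomicPart ξ) s + signedCDF (atomicPart η) s := by
  unfold zeta signedCDF Measure.real
  split_ifs <;> ring

lemma zeta_sub_zeta (ξ η : Measure ℝ) [IsLocallyFiniteMeasure ξ] [IsLocallyFiniteMeasure η]
    {s t : ℝ} (hst : s ≤ t) :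
    zeta ξ η t - zeta ξ η s =
      (t - s) + (atomicPart ξ).real (Ico s t) + (atomicPart η).real (Ico s t) := by
  rw [zeta_eq_add_signedCDF, zeta_eq_add_signedCDF, ← signedCDF_sub_signedCDF _ hst,
    ← signedCDF_sub_signedCDF _ hst]
  ring

/-- `ζ` leaves room, right after each `s`, for the interval `[ζ s, ζ s + μ {s}]` onto which
`starM` spreads the atom of `μ` at `s`. -/
def LeavesRoomFor (ζ : ℝ → ℝ) (μ : Measure ℝ) : Prop :=
  ∀ ⦃s t : ℝ⦄, s < t → ζ s + (μ {s}).toReal < ζ t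

lemma zeta_leavesRoomFor_left (ξ η : Measure ℝ) [IsLocallyFiniteMeasure ξ]
    [IsLocallyFiniteMeasure η] : LeavesRoomFor (zeta ξ η) ξ := by
  intro s t hst
  have hgap := zeta_sub_zeta ξ η hst.le
  have hatom : (ξ {s}).toReal ≤ (atomicPart ξ).real (Ico s t) := by
    rw [← atomicPart_singleton]
    exact measureReal_mono (singleton_subset_iff.mpr (left_mem_Ico.mpr hst))
      measure_Ico_lt_top.ne
  have : 0 ≤ (atomicPart η).real (Ico s t) := measureReal_nonneg
  linarith

lemma zeta_comm (ξ η : Measure ℝ) : zeta η ξ = zeta ξ η := by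
  ext s
  unfold zeta
  split_ifs <;> ring

lemma zeta_leavesRoomFor_right (ξ η : Measure ℝ) [IsLocallyFiniteMeasure ξ]
    [IsLocallyFiniteMeasure η] : LeavesRoomFor (zeta ξ η) η :=
  zeta_comm ξ η ▸ zeta_leavesRoomFor_left η ξ

namespace LeavesRoomFor

variable {ζ : ℝ → ℝ} {μ ν : Measure ℝ}

lemma strictMono (h : LeavesRoomFor ζ μ) : StrictMono ζ := fun _ _ hst =>
  (le_add_of_nonneg_right ENNReal.toReal_nonneg).trans_lt (h hst)

lemma measurableEmbedding (h : LeavesRoomFor ζ μ) : MeasurableEmbedding ζ :=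
  h.strictMono.monotone.measurable.measurableEmbedding h.strictMono.injective

lemma eq_of_mem_Icc (h : LeavesRoomFor ζ μ) {s t : ℝ}
    (hs : ζ s ∈ Icc (ζ t) (ζ t + (μ {t}).toReal)) : s = t := by
  rcases lt_trichotomy s t with hst | rfl | hts
  · exact absurd (h.strictMono hst) hs.1.not_gt
  · rfl
  · exact absurd (h hts) hs.2.not_gt

lemma disjoint_Icc (hμ : LeavesRoomFor ζ μ) (hν : LeavesRoomFor ζ ν) {s t : ℝ} (hst : s ≠ t) :
    Disjoint (Icc (ζ s) (ζ s + (μ {s}).toReal)) (Icc (ζ t) (ζ t + (ν {t}).toReal)) := by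
  rw [disjoint_left]
  rintro x ⟨hsx, hxs⟩ ⟨htx, hxt⟩
  rcases hst.lt_or_gt with hst | hts
  · linarith [hμ hst]
  · linarith [hν hts]

end LeavesRoomFor

noncomputable def atomSpread (ζ : ℝ → ℝ) (μ : Measure ℝ) (t : ℝ) : Measure ℝ :=
  (μ {t})⁻¹ • volume.restrict (Icc (ζ t) (ζ t + (μ {t}).toReal))

lemma starM_eq (ξ η μ : Measure ℝ) :
    starM ξ η μ =
      (diffusePart μ).map (zeta ξ η) + (atomicPart μ).bind (atomSpread (zeta ξ η) μ) :=
  rfl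

section atomSpread

variable {ζ : ℝ → ℝ} {μ : Measure ℝ}

lemma bind_atomSpread_singleton (m : Measure ℝ) (v : ℝ) : m.bind (atomSpread ζ μ) {v} = 0 :=
  Measure.bind_apply_eq_zero_of_ae (measurableSet_singleton v) <| .of_forall fun t => by
    simp [atomSpread]

lemma bind_atomSpread_apply_eq_zero [SFinite μ] {s : Set ℝ} (hs : MeasurableSet s)
    (h : ∀ t, μ {t} ≠ 0 → Disjoint s (Icc (ζ t) (ζ t + (μ {t}).toReal))) :
    (atomicPart μ).bind (atomSpread ζ μ) s = 0 := by
  refine Measure.bind_apply_eq_zero_of_ae hs ?_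
  filter_upwards [ae_atomicPart_measure_singleton_ne_zero μ] with t ht
  rw [atomSpread, Measure.smul_apply, Measure.restrict_apply hs, (h t ht).inter_eq,
    measure_empty, smul_zero]

lemma bind_atomSpread_mutuallySingular_map_diffusePart [SFinite μ] (hμ : LeavesRoomFor ζ μ)
    (ν : Measure ℝ) : (atomicPart μ).bind (atomSpread ζ μ) ⟂ₘ (diffusePart ν).map ζ := by
  have hζ := hμ.measurableEmbedding
  have hatoms := countable_setOf_measure_singleton_ne_zero μ
  refine ⟨ζ '' {t | μ {t} ≠ 0}ᶜ, hζ.measurableSet_image.mpr hatoms.measurableSet.compl, ?_, ?_⟩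
  · refine bind_atomSpread_apply_eq_zero (hζ.measurableSet_image.mpr
      hatoms.measurableSet.compl) fun t ht => disjoint_left.mpr ?_
    rintro _ ⟨s, hs, rfl⟩ hst
    exact hs (hμ.eq_of_mem_Icc hst ▸ ht)
  · rw [hζ.map_apply, preimage_compl, hζ.injective.preimage_image, compl_compl]
    exact hatoms.measure_zero _

lemma bind_atomSpread_mutuallySingular {ν : Measure ℝ} [SFinite μ] [SFinite ν]
    (hμ : LeavesRoomFor ζ μ) (hν : LeavesRoomFor ζ ν) (hμν : μ ⟂ₘ ν) :
    (atomicPart μ).bind (atomSpread ζ μ) ⟂ₘ (atomicPart ν).bind (atomSpread ζ ν) := by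
  set U := ⋃ t ∈ {t | ν {t} ≠ 0}, Icc (ζ t) (ζ t + (ν {t}).toReal)
  have hU : MeasurableSet U :=
    .biUnion (countable_setOf_measure_singleton_ne_zero ν) fun _ _ => measurableSet_Icc
  refine ⟨U, hU, bind_atomSpread_apply_eq_zero hU fun t ht => ?_,
    bind_atomSpread_apply_eq_zero hU.compl fun t ht => ?_⟩
  · refine disjoint_iUnion₂_left.mpr fun s hs => (hμ.disjoint_Icc hν ?_).symm
    rintro rfl
    exact (hμν.measure_singleton_eq_zero_or _).elim ht hs
  · exact disjoint_compl_left.mono_right <|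
      subset_biUnion_of_mem (u := fun t => Icc (ζ t) (ζ t + (ν {t}).toReal)) ht

end atomSpread

lemma map_diffusePart_singleton {ζ : ℝ → ℝ} (hζ : MeasurableEmbedding ζ) (μ : Measure ℝ)
    (v : ℝ) : (diffusePart μ).map ζ {v} = 0 := by
  rw [hζ.map_apply]
  exact (subsingleton_singleton.preimage hζ.injective).measure_zero _

lemma starM_singleton (ξ η μ : Measure ℝ) (hζ : MeasurableEmbedding (zeta ξ η)) (v : ℝ) :
    starM ξ η μ {v} = 0 := by
  rw [starM_eq, Measure.add_apply, map_diffusePart_singleton hζ, bind_atomSpread_singleton,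
    add_zero]

/-- The measures `ξ*` and `η*` are diffuse, and if `ξ` and `η` are mutually singular
then so are `ξ*` and `η*`. -/
theorem starM_diffuse_and_mutuallySingular (ξ η : Measure ℝ)
    [IsLocallyFiniteMeasure ξ] [IsLocallyFiniteMeasure η] :
    (∀ t : ℝ, starM ξ η ξ {t} = 0) ∧ (∀ t : ℝ, starM ξ η η {t} = 0) ∧
      (ξ ⟂ₘ η → starM ξ η ξ ⟂ₘ starM ξ η η) := by
  have hξ := zeta_leavesRoomFor_left ξ η
  have hη := zeta_leavesRoomFor_right ξ η
  have hζ := hξ.measurableEmbedding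
  refine ⟨starM_singleton ξ η ξ hζ, starM_singleton ξ η η hζ, fun hξη => ?_⟩
  rw [starM_eq, starM_eq]
  refine .add_left (.add_right ?_ ?_) (.add_right ?_ ?_)
  · exact hζ.mutuallySingular_map ((hξη.restrict _).symm.restrict _).symm
  · exact (bind_atomSpread_mutuallySingular_map_diffusePart hη ξ).symm
  · exact bind_atomSpread_mutuallySingular_map_diffusePart hξ η
  · exact bind_atomSpread_mutuallySingular hξ hη hξη
end
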